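/- If the enhancement e : V → ℤ/4 is improper, i.e. there exists x in the radical V^⊥ = {x : b(x,y)=0 for all y} with e(x) ≠ 0, then the Gauss sum γ(V) = ∑_{v∈V} i^{e(v)} equals 0. -/

import Mathlib

/-!
Translation by a radical element `x` permutes `V` and, since `b x ⬝ = 0`, shifts the enhancement
by the constant `e x`. As `2 • x = 0`, the value `e x` is `2`-torsion in `ℤ/4`, so `e x = 2` when it
is nonzero; then every term of the Gauss sum is multiplied by `i ^ 2 = -1` under the translation,
and `γ(V) = -γ(V)`.
-/

/-- The nontrivial homomorphism `ZMod 2 → ZMod 4`, sending `1` to `2`. -/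
def twice (a : ZMod 2) : ZMod 4 := 2 * a.val

@[simp]
lemma twice_zero : twice 0 = 0 := by decide

lemma ZMod.eq_two_of_ne_zero_of_add_self_eq_zero (a : ZMod 4) (ha : a ≠ 0) (h : a + a = 0) :
    a = 2 := by
  revert a; decide

lemma Complex.I_pow_val_add (a c : ZMod 4) : I ^ (a + c).val = I ^ a.val * I ^ c.val := by
  rw [ZMod.val_add, ← pow_add, ← Nat.mod_add_div (a.val + c.val) 4, pow_add, pow_mul,
    Complex.I_pow_four, one_pow, mul_one, Nat.add_mul_mod_self_left, Nat.mod_mod]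

lemma Fintype.sum_eq_zero_of_map_add_left_eq_mul {G K : Type*} [AddGroup G] [Fintype G]
    [CommRing K] [NoZeroDivisors K] (f : G → K) (x : G) (c : K) (hc : c ≠ 1)
    (h : ∀ v, f (x + v) = c * f v) : ∑ v, f v = 0 := by
  have hinv : ∑ v, f v = c * ∑ v, f v := by
    rw [Finset.mul_sum, ← Equiv.sum_comp (Equiv.addLeft x) f]
    exact Finset.sum_congr rfl fun v _ => h v
  have : (1 - c) * ∑ v, f v = 0 := by linear_combination hinv
  exact (mul_eq_zero.mp this).resolve_left (sub_ne_zero.mpr hc.symm)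

section Enhancement

variable {V : Type*} [AddCommGroup V] [Module (ZMod 2) V]
  {b : V →ₗ[ZMod 2] V →ₗ[ZMod 2] ZMod 2} {e : V → ZMod 4}

lemma enhancement_zero (he : ∀ x y, e (x + y) = e x + e y + twice (b x y)) : e 0 = 0 := by
  simpa using he 0 0

lemma enhancement_add_of_radical (he : ∀ x y, e (x + y) = e x + e y + twice (b x y))
    {x : V} (hrad : ∀ y, b x y = 0) (v : V) : e (x + v) = e x + e v := by
  rw [he, hrad, twice_zero, add_zero]

lemma enhancement_radical_eq_two (he : ∀ x y, e (x + y) = e x + e y + twice (b x y))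
    {x : V} (hrad : ∀ y, b x y = 0) (hex : e x ≠ 0) : e x = 2 := by
  refine ZMod.eq_two_of_ne_zero_of_add_self_eq_zero _ hex ?_
  rw [← enhancement_add_of_radical he hrad, ZModModule.add_self, enhancement_zero he]

end Enhancement

open Complex in
theorem gauss_sum_improper_eq_zero_general (V : Type*) [AddCommGroup V] [Module (ZMod 2) V]
    [Fintype V]
    (b : V →ₗ[ZMod 2] V →ₗ[ZMod 2] ZMod 2)
    (e : V → ZMod 4)
    (he : ∀ x y, e (x + y) = e x + e y + twice (b x y))
    (x : V) (hrad : ∀ y, b x y = 0) (hex : e x ≠ 0) :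
    ∑ v : V, I ^ (e v).val = 0 := by
  refine Fintype.sum_eq_zero_of_map_add_left_eq_mul _ x (-1) (by norm_num) fun v => ?_
  have htwo : I ^ (2 : ZMod 4).val = -1 := I_sq
  rw [enhancement_add_of_radical he hrad, I_pow_val_add, enhancement_radical_eq_two he hrad hex,
    htwo]

open Complex in
theorem gauss_sum_improper_eq_zero (V : Type*) [AddCommGroup V] [Module (ZMod 2) V]
    [Fintype V]
    (b : V →ₗ[ZMod 2] V →ₗ[ZMod 2] ZMod 2) (hsymm : ∀ x y, b x y = b y x)
    (e : V → ZMod 4)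
    (he : ∀ x y, e (x + y) = e x + e y + twice (b x y))
    (x : V) (hrad : ∀ y, b x y = 0) (hex : e x ≠ 0) :
    ∑ v : V, I ^ (e v).val = 0 :=
  gauss_sum_improper_eq_zero_general V b e he x hrad hex
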